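/- Let φ(x) = x/√(x²+1) and n_s ≥ 3. Let Ŵ₁ ∈ ℝ^{d_x×N}, b̂₁ ∈ ℝ^N, Ŵ₂ ∈ ℝ^{N×d_y}, b̂₂ ∈ ℝ^{d_y}, and for every sequence length s ≥ 1 define the position-wise feed-forward map f̂(X) = φ(X Ŵ₁ + 𝟙_s b̂₁ᵀ) Ŵ₂ + 𝟙_s b̂₂ᵀ for X ∈ ℝ^{s×d_x}, where φ is applied entrywise and 𝟙_s ∈ ℝ^s is the all-ones vector. Then there exist W₁ ∈ ℝ^{d_x×n_s N}, b₁ ∈ ℝ^{n_s N}, W₂ ∈ ℝ^{n_s N×d_y}, b₂ ∈ ℝ^{d_y} such that for every s ≥ 1 and every X ∈ ℝ^{s×d_x}, PLN(n_s) applied to each row of X W₁ + 𝟙_s b₁ᵀ, followed by right-multiplication by W₂ and addition of 𝟙_s b₂ᵀ, equals f̂(X) exactly. -/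

import Mathlib

/-- Layer normalization on `ℝ^n`: `LN(h)ⱼ = (hⱼ − μ)/σ` when `σ ≠ 0`, and `0` when `σ = 0`. -/
noncomputable def LN {n : ℕ} (h : Fin n → ℝ) : Fin n → ℝ :=
  let μ : ℝ := (∑ i, h i) / n
  let σ : ℝ := Real.sqrt ((∑ i, (h i - μ) ^ 2) / n)
  if σ = 0 then 0 else fun j => (h j - μ) / σ

/-- Parallel layer normalization: `N` consecutive blocks of size `ns`, `LN` on each. -/
noncomputable def PLN (ns N : ℕ) (h : Fin (N * ns) → ℝ) : Fin (N * ns) → ℝ :=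
  fun i => LN (fun j : Fin ns => h (finProdFinEquiv (i.divNat, j))) i.modNat

/-- The activation function `φ(x) = x/√(x²+1)`. -/
noncomputable def phi (x : ℝ) : ℝ := x / Real.sqrt (x ^ 2 + 1)

/-! Each hidden neuron is replaced by a block of `ns` neurons with pre-activations `z • u + v`,
where `z` is the neuron's pre-activation, `u = (2, -1, -1, 0, …)` and `v = (0, √3, -√3, 0, …)`.
As `u` and `v` have mean zero, are orthogonal and have the same norm, layer normalization divides
the block by a constant multiple of `√(z² + 1)`, so its first coordinate is a constant multiple of
`φ(z)`; the second linear layer reads off these coordinates, rescaled. -/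

open Finset Matrix

theorem Fin.divNat_finProdFinEquiv {m n : ℕ} (b : Fin m) (j : Fin n) :
    (finProdFinEquiv (b, j)).divNat = b :=
  congrArg Prod.fst (finProdFinEquiv.symm_apply_apply (b, j))

theorem Fin.modNat_finProdFinEquiv {m n : ℕ} (b : Fin m) (j : Fin n) :
    (finProdFinEquiv (b, j)).modNat = j :=
  congrArg Prod.snd (finProdFinEquiv.symm_apply_apply (b, j))

theorem PLN_finProdFinEquiv {ns N : ℕ} (h : Fin (N * ns) → ℝ) (b : Fin N) (j : Fin ns) :
    PLN ns N h (finProdFinEquiv (b, j)) = LN (fun j' => h (finProdFinEquiv (b, j'))) j := by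
  simp only [PLN, Fin.divNat_finProdFinEquiv, Fin.modNat_finProdFinEquiv]

/-- Division by zero returns zero, so this also covers the degenerate case `σ = 0`. -/
theorem LN_apply_of_sum_eq_zero {n : ℕ} {v : Fin n → ℝ} (hv : ∑ i, v i = 0) (j : Fin n) :
    LN v j = v j / √((∑ i, v i ^ 2) / n) := by
  simp only [LN, hv, zero_div, sub_zero]
  split_ifs with hσ
  · rw [hσ, div_zero, Pi.zero_apply]
  · rfl

theorem Fin.sum_univ_eq_sum_range_of_le {M : Type*} [AddCommMonoid M] {m n : ℕ} (hmn : m ≤ n)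
    (g : ℕ → M) (hg : ∀ i, m ≤ i → g i = 0) :
    ∑ j : Fin n, g j = ∑ i ∈ range m, g i := by
  rw [Fin.sum_univ_eq_sum_range, sum_subset (range_subset_range.2 hmn)]
  intro i _ hi
  exact hg i (by simpa using hi)

noncomputable def plnSlope : ℕ → ℝ
  | 0 => 2
  | 1 => -1
  | 2 => -1
  | _ => 0

noncomputable def plnOffset : ℕ → ℝ
  | 1 => √3
  | 2 => -√3
  | _ => 0

section SlopeOffset

variable {ns : ℕ} (hns : 3 ≤ ns) (z : ℝ)

include hns

theorem sum_slope_mul_add_offset :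
    ∑ j : Fin ns, (z * plnSlope j + plnOffset j) = 0 := by
  rw [Fin.sum_univ_eq_sum_range_of_le hns fun i => z * plnSlope i + plnOffset i]
  · simp only [sum_range_succ, range_one, sum_singleton, plnSlope, plnOffset]
    ring
  · intro i hi
    obtain ⟨k, rfl⟩ := Nat.exists_eq_add_of_le' hi
    simp [plnSlope, plnOffset]

theorem sum_sq_slope_mul_add_offset :
    ∑ j : Fin ns, (z * plnSlope j + plnOffset j) ^ 2 = 6 * (z ^ 2 + 1) := by
  rw [Fin.sum_univ_eq_sum_range_of_le hns fun i => (z * plnSlope i + plnOffset i) ^ 2]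
  · have h3 : √3 ^ 2 = 3 := Real.sq_sqrt (by norm_num)
    simp only [sum_range_succ, range_one, sum_singleton, plnSlope, plnOffset]
    linear_combination 2 * h3
  · intro i hi
    obtain ⟨k, rfl⟩ := Nat.exists_eq_add_of_le' hi
    simp [plnSlope, plnOffset]

theorem LN_slope_mul_add_offset_zero :
    LN (fun j : Fin ns => z * plnSlope j + plnOffset j) ⟨0, by omega⟩ = 2 / √(6 / ns) * phi z := by
  rw [LN_apply_of_sum_eq_zero (sum_slope_mul_add_offset hns z), sum_sq_slope_mul_add_offset hns z,
    mul_div_right_comm, Real.sqrt_mul (by positivity)]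
  simp only [phi, plnSlope, plnOffset]
  ring

end SlopeOffset

section Blocks

variable {R : Type*} [CommSemiring R] {N ns : ℕ}

/-- The vector in `R^(N * ns)` whose `b`-th block of size `ns` is `y b • p + q`. -/
def blockAffine (p q : Fin ns → R) (y : Fin N → R) : Fin (N * ns) → R :=
  fun c => y c.divNat * p c.modNat + q c.modNat

theorem blockAffine_finProdFinEquiv (p q : Fin ns → R) (y : Fin N → R) (b : Fin N) (j : Fin ns) :
    blockAffine p q y (finProdFinEquiv (b, j)) = y b * p j + q j := by
  rw [blockAffine, Fin.divNat_finProdFinEquiv, Fin.modNat_finProdFinEquiv]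

theorem mul_of_add_blockAffine {ι κ : Type*} [Fintype κ] (X : Matrix ι κ R)
    (A : Matrix κ (Fin N) R) (p q : Fin ns → R) (a : Fin N → R) (r : ι) :
    (fun c => (X * of fun k c => A k c.divNat * p c.modNat) r c + blockAffine p q a c) =
      blockAffine p q fun b => (X * A) r b + a b := by
  funext c
  simp only [blockAffine, mul_apply, of_apply, sum_mul, mul_assoc, add_mul, add_assoc]

theorem sum_mul_ite_modNat_eq_zero (h0 : 0 < ns) (u : Fin (N * ns) → R) (w : Fin N → R) :
    ∑ c, u c * (if (c.modNat : ℕ) = 0 then w c.divNat else 0) =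
      ∑ b, u (finProdFinEquiv (b, ⟨0, h0⟩)) * w b := by
  rw [← finProdFinEquiv.sum_comp, Fintype.sum_prod_type]
  refine sum_congr rfl fun b _ => ?_
  rw [sum_eq_single ⟨0, h0⟩]
  · simp [Fin.divNat_finProdFinEquiv, Fin.modNat_finProdFinEquiv]
  · intro j _ hj
    rw [Fin.modNat_finProdFinEquiv, if_neg (fun h => hj (Fin.ext h)), mul_zero]
  · simp

end Blocks

theorem PLN_blockAffine_finProdFinEquiv {N ns : ℕ} (p q : Fin ns → ℝ) (y : Fin N → ℝ) (b : Fin N)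
    (j : Fin ns) :
    PLN ns N (blockAffine p q y) (finProdFinEquiv (b, j)) = LN (fun j' => y b * p j' + q j') j := by
  simp only [PLN_finProdFinEquiv, blockAffine_finProdFinEquiv]

/-- Representation of position-wise feed-forward networks by PLN layers: for any
position-wise FFN `X ↦ φ(X Ŵ₁ + 𝟙 b̂₁ᵀ) Ŵ₂ + 𝟙 b̂₂ᵀ`, there are sequence linear layers so
that applying `PLN(n_s)` row-wise in between represents it exactly, for all sequence
lengths `s ≥ 1` and all inputs `X`. -/
theorem PLN_represents_positionwise_FFN (ns N dx dy : ℕ) (hns : 3 ≤ ns)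
    (Wh₁ : Matrix (Fin dx) (Fin N) ℝ) (bh₁ : Fin N → ℝ)
    (Wh₂ : Matrix (Fin N) (Fin dy) ℝ) (bh₂ : Fin dy → ℝ) :
    ∃ (W₁ : Matrix (Fin dx) (Fin (N * ns)) ℝ) (b₁ : Fin (N * ns) → ℝ)
      (W₂ : Matrix (Fin (N * ns)) (Fin dy) ℝ) (b₂ : Fin dy → ℝ),
      ∀ (s : ℕ), 1 ≤ s → ∀ X : Matrix (Fin s) (Fin dx) ℝ,
        (Matrix.of fun (r : Fin s) (j : Fin (N * ns)) =>
            PLN ns N (fun c => (X * W₁) r c + b₁ c) j) * W₂ +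
          Matrix.of (fun (_ : Fin s) (j : Fin dy) => b₂ j)
        = (Matrix.of fun (r : Fin s) (i : Fin N) => phi ((X * Wh₁) r i + bh₁ i)) * Wh₂ +
            Matrix.of (fun (_ : Fin s) (j : Fin dy) => bh₂ j) := by
  set p : Fin ns → ℝ := fun j => plnSlope j
  set q : Fin ns → ℝ := fun j => plnOffset j
  refine ⟨of fun k c => Wh₁ k c.divNat * p c.modNat, blockAffine p q bh₁,
    of fun c l => if (c.modNat : ℕ) = 0 then √(6 / ns) / 2 * Wh₂ c.divNat l else 0, bh₂, ?_⟩
  intro s _ X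
  ext r l
  simp only [Matrix.add_apply]
  rw [mul_apply, mul_apply]
  simp only [of_apply, mul_of_add_blockAffine]
  rw [sum_mul_ite_modNat_eq_zero (by omega) _ (fun b => √(6 / ns) / 2 * Wh₂ b l)]
  congr 1
  refine sum_congr rfl fun b _ => ?_
  have hκ : √(6 / ns) ≠ 0 := by
    have : (0 : ℝ) < ns := by exact_mod_cast (by omega : 0 < ns)
    positivity
  rw [PLN_blockAffine_finProdFinEquiv, LN_slope_mul_add_offset_zero hns]
  field_simp
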